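/- arXiv:2106.04856 — 2 statements merged into one kernel-verified Lean document; each statement's English description precedes it below -/
import Mathlib

section
/- Let H be a finite multiset (or weighted set) of k-tuples over [ℓ], where each tuple a ∈ H has a positive weight w(a), and suppose the total weight w_H = Σ_{a∈H} w(a) is at least p·ℓ for some p > 0. For x ∈ [ℓ] and i ∈ [k], define w_i(x) as the total weight of tuples a ∈ H with a_i = x. Then for every real a ≥ √k, there exists a tuple a ∈ H such that for every coordinate i ∈ [k], w_i(a_i) ≥ p/a². -/
/-!
Call a value `x` light in coordinate `i` if the tuples with `i`-th coordinate `x` weigh less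
than `c`. The tuples that are light in coordinate `i` are grouped into at most `ℓ` fibres of
weight `< c` each, so they weigh `< ℓ c`. If no tuple were heavy in every coordinate, a union
bound over the `k` coordinates would give total weight `< k ℓ c`, which is at most `p ℓ` for
`c = p / a²` and `a² ≥ k`.
-/

open Finset

namespace HeavyTuple

variable {ι α : Type*} [DecidableEq α]

/-- The paper's `w_i(x)`. -/
def coordWeight (H : Finset (ι → α)) (w : (ι → α) → ℝ) (i : ι) (x : α) : ℝ :=
  ∑ b ∈ H with b i = x, w b

variable (H : Finset (ι → α)) (w : (ι → α) → ℝ)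

theorem sum_light_eq_sum_coordWeight [Fintype α] (i : ι) (c : ℝ) :
    ∑ b ∈ H with coordWeight H w i (b i) < c, w b =
      ∑ x with coordWeight H w i x < c, coordWeight H w i x := by
  have hmaps : ∀ b ∈ H.filter (fun b => coordWeight H w i (b i) < c),
      b i ∈ univ.filter (fun x => coordWeight H w i x < c) := fun b hb => by
    simpa using (mem_filter.1 hb).2
  rw [← sum_fiberwise_of_maps_to hmaps]
  refine sum_congr rfl fun x hx => ?_
  rw [coordWeight, filter_filter]
  exact sum_congr (filter_congr fun b _ =>
    ⟨And.right, fun hbx => ⟨hbx ▸ (mem_filter.1 hx).2, hbx⟩⟩) fun _ _ => rfl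

theorem sum_light_lt_card_mul [Fintype α] [Nonempty α] (i : ι) {c : ℝ} (hc : 0 < c) :
    ∑ b ∈ H with coordWeight H w i (b i) < c, w b < Fintype.card α * c := by
  rw [sum_light_eq_sum_coordWeight, sum_filter]
  calc _ < ∑ _x : α, c := sum_lt_sum_of_nonempty univ_nonempty fun x _ => by
        split_ifs with hx
        exacts [hx, hc]
    _ = Fintype.card α * c := by simp

theorem sum_le_sum_sum_light [Fintype ι] {c : ℝ} (hw : ∀ b ∈ H, 0 ≤ w b)
    (hlight : ∀ b ∈ H, ∃ i, coordWeight H w i (b i) < c) :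
    ∑ b ∈ H, w b ≤ ∑ i, ∑ b ∈ H with coordWeight H w i (b i) < c, w b := by
  simp_rw [sum_filter]
  rw [sum_comm]
  refine sum_le_sum fun b hb => ?_
  obtain ⟨i, hi⟩ := hlight b hb
  calc w b = if coordWeight H w i (b i) < c then w b else 0 := (if_pos hi).symm
    _ ≤ ∑ j, if coordWeight H w j (b j) < c then w b else 0 :=
      single_le_sum (f := fun j => if coordWeight H w j (b j) < c then w b else 0)
        (fun _ _ => ite_nonneg (hw b hb) le_rfl) (mem_univ i)

theorem exists_forall_le_coordWeight [Fintype ι] [Fintype α] [Nonempty ι] [Nonempty α]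
    {c : ℝ} (hc : 0 < c) (hw : ∀ b ∈ H, 0 ≤ w b)
    (htot : Fintype.card ι * (Fintype.card α * c) ≤ ∑ b ∈ H, w b) :
    ∃ t ∈ H, ∀ i, c ≤ coordWeight H w i (t i) := by
  by_contra! hlight
  refine absurd htot (not_le.mpr ?_)
  calc ∑ b ∈ H, w b ≤ ∑ i, ∑ b ∈ H with coordWeight H w i (b i) < c, w b :=
      sum_le_sum_sum_light H w hw hlight
    _ < ∑ _i : ι, Fintype.card α * c :=
      sum_lt_sum_of_nonempty univ_nonempty fun i _ => sum_light_lt_card_mul H w i hc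
    _ = Fintype.card ι * (Fintype.card α * c) := by simp

end HeavyTuple

open HeavyTuple in
/-- Weighted tuples claim (Claim 5.2 of the paper): if a weighted set `H` of `k`-tuples over
`[ℓ]` has total weight at least `p * ℓ`, then for every `a ≥ √k` there is a tuple all of whose
coordinates are `(i, 1/a²)`-heavy, i.e. the total weight of tuples agreeing with it in the
`i`-th coordinate is at least `p / a²`. -/
theorem heavy_tuple_exists (k ℓ : ℕ) (hℓ : 0 < ℓ)
    (H : Finset (Fin k → Fin ℓ)) (w : (Fin k → Fin ℓ) → ℝ)
    (hw : ∀ b ∈ H, 0 < w b) (p : ℝ) (hp : 0 < p)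
    (htot : p * ℓ ≤ ∑ b ∈ H, w b)
    (a : ℝ) (ha : Real.sqrt k ≤ a) :
    ∃ t ∈ H, ∀ i : Fin k,
      p / a ^ 2 ≤ ∑ b ∈ H.filter (fun b => b i = t i), w b := by
  rcases Nat.eq_zero_or_pos k with rfl | hk
  · obtain ⟨t, ht⟩ : H.Nonempty :=
      nonempty_of_sum_ne_zero ((by positivity : 0 < p * ℓ).trans_le htot).ne'
    exact ⟨t, ht, fun i => i.elim0⟩
  have : NeZero k := ⟨hk.ne'⟩
  have : NeZero ℓ := ⟨hℓ.ne'⟩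
  have hk_le : (k : ℝ) ≤ a ^ 2 := (Real.sqrt_le_iff.mp ha).2
  have ha2 : 0 < a ^ 2 := (Nat.cast_pos.mpr hk).trans_le hk_le
  refine exists_forall_le_coordWeight H w (by positivity) (fun b hb => (hw b hb).le) ?_
  calc (Fintype.card (Fin k) : ℝ) * (Fintype.card (Fin ℓ) * (p / a ^ 2))
      = k / a ^ 2 * (p * ℓ) := by simp only [Fintype.card_fin]; ring
    _ ≤ 1 * (p * ℓ) := by gcongr; exact (div_le_one ha2).mpr hk_le
    _ ≤ ∑ b ∈ H, w b := by simpa using htot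
end

section
/- Let π be a permutation of [k]. Suppose boxes B₁, ..., B_t (subgrids of the form S × I with S an index interval and I a value interval, pairwise such that no two boxes overlap) are partitioned into components C₁, ..., C_p, and suppose a π-appearance exists whose j-th leg lies in box φ(j) for a leg-mapping φ:[k]→{B₁,...,B_t}, inducing on each component C_q the subpermutation ν_q of π (the pattern formed by the legs of π falling in C_q) with induced leg-mapping φ_q. Then conversely: given, for each q ∈ [p], any φ_q-legged ν_q-appearance inside component C_q, the union of these appearances forms a π-appearance in f, provided the components are pairwise non-interleaving (for q ≠ q', either all index intervals of C_q precede those of C_{q'} or vice versa, and all value intervals of C_q are below those of C_{q'} or vice versa, consistently with the order induced by π). -/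
/-!
Send each leg of `π` to the position chosen for it by the appearance in its own component.
Two legs in the same component are compared correctly because `ν q` is order-isomorphic to `π`
on the legs of component `q`; two legs in different components are compared correctly because
the regions of the components are separated, in index and in value, in the same direction as
the legs of `π` themselves.
-/

theorem sigma_lt_iff_lt_of_separated {ι α β : Type*} {κ : ι → Type*}
    [LinearOrder α] [LinearOrder β] (a : ∀ q, κ q → α) (b : ∀ q, κ q → β)
    (hblock : ∀ q s t, a q s < a q t ↔ b q s < b q t)
    (hsplit : ∀ q q', q ≠ q' → (∀ s s', b q s < b q' s') ∨ (∀ s s', b q' s' < b q s))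
    (hsep : ∀ q q', q ≠ q' → (∀ s s', b q s < b q' s') → ∀ s s', a q s < a q' s')
    (x y : Σ q, κ q) : a x.1 x.2 < a y.1 y.2 ↔ b x.1 x.2 < b y.1 y.2 := by
  obtain ⟨q, s⟩ := x
  obtain ⟨q', s'⟩ := y
  rcases eq_or_ne q q' with rfl | hq
  · exact hblock q s s'
  rcases hsplit q q' hq with hlt | hgt
  · exact iff_of_true (hsep q q' hq hlt s s') (hlt s s')
  · exact iff_of_false (not_lt_of_gt (hsep q' q hq.symm (fun t t' => hgt t' t) s' s))
      (not_lt_of_gt (hgt s s'))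

/-- Observation 2.9 of the paper (combining restricted appearances): suppose the `k` legs of `π`
are split into `p` components, the `q`-th component carrying the legs `e q` of `π` (the images of
the `e q` partition `[k]`), with induced subpermutation `ν q` and with index-region `X q` and
value-region `Y q`.  If the components are pairwise non-interleaving, consistently with the order
induced by `π` (both in index and in value), then any choice of a `ν q`-appearance inside the
region of component `q`, for every `q`, combines into a `π`-appearance in `f`. -/
theorem combine_component_appearances {n k p : ℕ} (f : Fin n → ℝ) (π : Equiv.Perm (Fin k))
    (r : Fin p → ℕ) (ν : ∀ q, Equiv.Perm (Fin (r q)))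
    (e : ∀ q, Fin (r q) → Fin k)
    (X : Fin p → Set (Fin n)) (Y : Fin p → Set ℝ)
    (hmono : ∀ q, StrictMono (e q))
    (hcover : ∀ j : Fin k, ∃! qs : Σ q : Fin p, Fin (r q), e qs.1 qs.2 = j)
    (hsplitIdx : ∀ q q', q ≠ q' →
      (∀ s s', e q s < e q' s') ∨ (∀ s s', e q' s' < e q s))
    (hsplitVal : ∀ q q', q ≠ q' →
      (∀ s s', π (e q s) < π (e q' s')) ∨ (∀ s s', π (e q' s') < π (e q s)))
    (hXord : ∀ q q', q ≠ q' → (∀ s s', e q s < e q' s') →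
      ∀ x ∈ X q, ∀ x' ∈ X q', x < x')
    (hYord : ∀ q q', q ≠ q' → (∀ s s', π (e q s) < π (e q' s')) →
      ∀ y ∈ Y q, ∀ y' ∈ Y q', y < y')
    (hν : ∀ q s t, ν q s < ν q t ↔ π (e q s) < π (e q t))
    (i : ∀ q, Fin (r q) → Fin n)
    (hi : ∀ q, StrictMono (i q))
    (hreg : ∀ q s, i q s ∈ X q ∧ f (i q s) ∈ Y q)
    (happ : ∀ q s t, f (i q s) < f (i q t) ↔ ν q s < ν q t) :
    ∃ j : Fin k → Fin n, StrictMono j ∧ ∀ s t, f (j s) < f (j t) ↔ π s < π t := by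
  choose c hc using fun j => (hcover j).exists
  have hidx := sigma_lt_iff_lt_of_separated i e
    (fun q s t => (hi q).lt_iff_lt.trans (hmono q).lt_iff_lt.symm) hsplitIdx
    (fun q q' hq h s s' => hXord q q' hq h _ (hreg q s).1 _ (hreg q' s').1)
  have hval := sigma_lt_iff_lt_of_separated (fun q s => f (i q s)) (fun q s => π (e q s))
    (fun q s t => (happ q s t).trans (hν q s t)) hsplitVal
    (fun q q' hq h s s' => hYord q q' hq h _ (hreg q s).2 _ (hreg q' s').2)
  refine ⟨fun s => i (c s).1 (c s).2, fun s t hst => ?_, fun s t => ?_⟩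
  · exact (hidx (c s) (c t)).2 (by rwa [hc, hc])
  · simpa only [hc] using hval (c s) (c t)
end
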